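/- (Lemma 2.2) Suppose V satisfies (V₁). Then for every H > 0, every R > 0 and every unit vector e ∈ ℝ^N, there exists a continuously differentiable loop q : [0,1] → ℝ^N \ {0} such that q(0) = q(1) = R e, q(t + 1/2) = -q(t) for all t ∈ [0, 1/2], and ∫₀¹ ( V(q(t)) + ½ (∇V(q(t)), q(t)) ) dt = H. -/

import Mathlib

/-!
Under Euler's identity `⟪x, ∇V x⟫ = -α V x` the integrand is `(1 - α/2) V (q t)`, and `V` is
homogeneous of degree `-α`. Take a unit vector `f ⊥ e` (here `N ≥ 2` is needed) and the great
circle `u t = cos (2πt) e + sin (2πt) f`; the loop is `R u` rescaled radially by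
`exp (s sin² (2πt))`, a factor that is `1` at `t = 0, 1/2, 1` and `1/2`-periodic, so endpoints and
antipodal symmetry survive. By homogeneity the integral becomes
`(1 - α/2) ∫₀¹ exp (-α s sin² (2πt)) V (R u t) dt`, which is continuous in `s`, tends to `0` as
`s → ∞` by dominated convergence and to `∞` as `s → -∞`, hence takes every positive value.
-/

open scoped InnerProductSpace
open Real MeasureTheory Filter Set Topology Module Interval

section Homogeneity

variable {E : Type*} [NormedAddCommGroup E] [InnerProductSpace ℝ E] [CompleteSpace E]

theorem apply_smul_eq_rpow_mul_of_inner_gradient {V : E → ℝ} {α : ℝ}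
    (hV : DifferentiableOn ℝ V {0}ᶜ) (hEuler : ∀ x ≠ 0, ⟪x, gradient V x⟫_ℝ = -α * V x)
    {x : E} (hx : x ≠ 0) {c : ℝ} (hc : 0 < c) :
    V (c • x) = c ^ (-α) * V x := by
  have hderiv : ∀ d ∈ Ioi (0 : ℝ), HasDerivAt (fun c : ℝ => c ^ α * V (c • x)) 0 d := by
    intro d (hd : 0 < d)
    have hdx : d • x ≠ 0 := smul_ne_zero hd.ne' hx
    have hVd : HasDerivAt (fun c : ℝ => V (c • x)) ⟪gradient V (d • x), x⟫_ℝ d := by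
      rw [inner_gradient_left]
      exact (hV.differentiableAt (isOpen_compl_singleton.mem_nhds hdx)).hasFDerivAt.comp_hasDerivAt
        d (by simpa using (hasDerivAt_id d).smul_const x)
    have hEuler_d : d * ⟪gradient V (d • x), x⟫_ℝ = -α * V (d • x) := by
      rw [← hEuler _ hdx, real_inner_smul_left, real_inner_comm]
    refine ((hasDerivAt_rpow_const (p := α) (Or.inl hd.ne')).mul hVd).congr_deriv ?_
    rw [rpow_sub_one hd.ne']
    field_simp
    linear_combination d ^ α * hEuler_d
  have hconst := isOpen_Ioi.is_const_of_deriv_eq_zero isPreconnected_Ioi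
    (fun d hd => (hderiv d hd).differentiableAt.differentiableWithinAt)
    (fun d hd => (hderiv d hd).deriv) hc (mem_Ioi.2 one_pos)
  simp only [one_rpow, one_smul, one_mul] at hconst
  rw [rpow_neg hc.le, ← hconst]
  field_simp

theorem apply_exp_smul_of_inner_gradient {V : E → ℝ} {α : ℝ}
    (hV : DifferentiableOn ℝ V {0}ᶜ) (hEuler : ∀ x ≠ 0, ⟪x, gradient V x⟫_ℝ = -α * V x)
    {x : E} (hx : x ≠ 0) (a : ℝ) :
    V (exp a • x) = exp (-α * a) * V x := by
  rw [apply_smul_eq_rpow_mul_of_inner_gradient hV hEuler hx (exp_pos a), ← exp_mul,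
    mul_comm a, mul_comm]

end Homogeneity

theorem exists_norm_eq_one_inner_eq_zero {E : Type*} [NormedAddCommGroup E]
    [InnerProductSpace ℝ E] [FiniteDimensional ℝ E] (hE : 2 ≤ finrank ℝ E) (e : E) :
    ∃ f : E, ‖f‖ = 1 ∧ ⟪e, f⟫_ℝ = 0 := by
  obtain ⟨v, hv, hv0⟩ := Submodule.exists_mem_ne_zero_of_ne_bot
    ((innerₛₗ ℝ e).ker_ne_bot_of_finrank_lt (by rw [finrank_self]; omega))
  refine ⟨‖v‖⁻¹ • v, norm_smul_inv_norm hv0, ?_⟩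
  rw [inner_smul_right, show ⟪e, v⟫_ℝ = 0 from hv, mul_zero]

section ModulatedCircle

variable {E : Type*} [NormedAddCommGroup E] [InnerProductSpace ℝ E]

noncomputable def modulatedCircle (e f : E) (R s t : ℝ) : E :=
  (R * exp (s * sin (2 * π * t) ^ 2)) • (cos (2 * π * t) • e + sin (2 * π * t) • f)

variable (e f : E) (R s : ℝ)

theorem modulatedCircle_zero : modulatedCircle e f R s 0 = R • e := by
  simp [modulatedCircle]

theorem modulatedCircle_one : modulatedCircle e f R s 1 = R • e := by
  simp [modulatedCircle]

theorem modulatedCircle_antiperiodic : Function.Antiperiodic (modulatedCircle e f R s) (1 / 2) := by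
  intro t
  rw [modulatedCircle, modulatedCircle, show 2 * π * (t + 1 / 2) = 2 * π * t + π by ring,
    sin_add_pi, cos_add_pi, neg_sq, neg_smul, neg_smul, ← neg_add, smul_neg]

theorem contDiff_modulatedCircle {n : WithTop ℕ∞} : ContDiff ℝ n (modulatedCircle e f R s) := by
  unfold modulatedCircle
  fun_prop

theorem modulatedCircle_eq_exp_smul (t : ℝ) :
    modulatedCircle e f R s t = exp (s * sin (2 * π * t) ^ 2) • modulatedCircle e f R 0 t := by
  simp only [modulatedCircle, zero_mul, exp_zero, mul_one, smul_smul, mul_comm]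

variable {e f}

theorem norm_modulatedCircle (he : ‖e‖ = 1) (hf : ‖f‖ = 1) (hef : ⟪e, f⟫_ℝ = 0) (t : ℝ) :
    ‖modulatedCircle e f R s t‖ = |R| * exp (s * sin (2 * π * t) ^ 2) := by
  have hcircle : ‖cos (2 * π * t) • e + sin (2 * π * t) • f‖ = 1 := by
    rw [← pow_eq_one_iff_of_nonneg (norm_nonneg _) two_ne_zero, norm_add_sq_real, norm_smul,
      norm_smul, real_inner_smul_left, real_inner_smul_right, hef, he, hf]
    simp [cos_sq_add_sin_sq]
  rw [modulatedCircle, norm_smul, hcircle, mul_one, norm_mul, norm_of_nonneg (exp_pos _).le,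
    Real.norm_eq_abs]

theorem modulatedCircle_ne_zero (hR : R ≠ 0) (he : ‖e‖ = 1) (hf : ‖f‖ = 1) (hef : ⟪e, f⟫_ℝ = 0)
    (t : ℝ) : modulatedCircle e f R s t ≠ 0 := by
  rw [← norm_pos_iff, norm_modulatedCircle R s he hf hef]
  exact mul_pos (abs_pos.2 hR) (exp_pos _)

end ModulatedCircle

section ExpSinSqIntegral

theorem ae_sin_two_pi_mul_ne_zero : ∀ᵐ t : ℝ, sin (2 * π * t) ≠ 0 := by
  refine measure_mono_null (fun t ht => ?_)
    ((countable_range fun n : ℤ => (n : ℝ) / 2).measure_zero _)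
  obtain ⟨n, hn⟩ := sin_eq_zero_iff.1 (not_not.1 ht)
  have : (n : ℝ) = 2 * t := mul_right_cancel₀ pi_ne_zero (by linarith)
  exact ⟨n, by linarith⟩

theorem half_le_sin_two_pi_mul_sq {t : ℝ} (ht : t ∈ Icc (1 / 8 : ℝ) (3 / 8)) :
    1 / 2 ≤ sin (2 * π * t) ^ 2 := by
  have : cos (2 * (2 * π * t)) ≤ 0 :=
    cos_nonpos_of_pi_div_two_le_of_le (by nlinarith [pi_pos, ht.1]) (by nlinarith [pi_pos, ht.2])
  rw [sin_sq_eq_half_sub]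
  linarith

variable {g : ℝ → ℝ}

theorem tendsto_integral_exp_mul_sin_sq_mul_atBot (hg : Continuous g) :
    Tendsto (fun s => ∫ t in (0 : ℝ)..1, exp (s * sin (2 * π * t) ^ 2) * g t) atBot (𝓝 0) := by
  have hbound : ∀ᶠ s in atBot, ∀ᵐ t, t ∈ Ι (0 : ℝ) 1 →
      ‖exp (s * sin (2 * π * t) ^ 2) * g t‖ ≤ |g t| := by
    filter_upwards [eventually_le_atBot 0] with s hs
    refine .of_forall fun t _ => ?_
    rw [norm_mul, norm_of_nonneg (exp_pos _).le, Real.norm_eq_abs]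
    exact mul_le_of_le_one_left (abs_nonneg _)
      (exp_le_one_iff.2 (mul_nonpos_of_nonpos_of_nonneg hs (sq_nonneg _)))
  have hlim : ∀ᵐ t, t ∈ Ι (0 : ℝ) 1 →
      Tendsto (fun s => exp (s * sin (2 * π * t) ^ 2) * g t) atBot (𝓝 0) := by
    filter_upwards [ae_sin_two_pi_mul_ne_zero] with t ht _
    simpa using (tendsto_exp_atBot.comp
      (tendsto_id.atBot_mul_const (sq_pos_of_ne_zero ht))).mul_const (g t)
  simpa using intervalIntegral.tendsto_integral_filter_of_dominated_convergence
    (F := fun s t => exp (s * sin (2 * π * t) ^ 2) * g t) (f := fun _ => 0) (μ := volume)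
    (fun t => |g t|) (.of_forall fun s => by fun_prop) hbound (hg.abs.intervalIntegrable 0 1) hlim

theorem tendsto_integral_exp_mul_sin_sq_mul_atTop (hg : Continuous g) (hg_pos : ∀ t, 0 < g t) :
    Tendsto (fun s => ∫ t in (0 : ℝ)..1, exp (s * sin (2 * π * t) ^ 2) * g t) atTop atTop := by
  have hF : ∀ s, Continuous fun t => exp (s * sin (2 * π * t) ^ 2) * g t := fun s => by fun_prop
  have hmass : 0 < ∫ t in (1 / 8 : ℝ)..(3 / 8), g t :=
    intervalIntegral.intervalIntegral_pos_of_pos_on (hg.intervalIntegrable _ _)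
      (fun t _ => hg_pos t) (by norm_num)
  refine tendsto_atTop_mono' _ ?_ ((tendsto_exp_atTop.comp
    (tendsto_id.atTop_div_const two_pos)).atTop_mul_const hmass)
  filter_upwards [eventually_ge_atTop 0] with s hs
  calc exp (s / 2) * ∫ t in (1 / 8 : ℝ)..(3 / 8), g t
      = ∫ t in (1 / 8 : ℝ)..(3 / 8), exp (s / 2) * g t :=
        (intervalIntegral.integral_const_mul _ _).symm
    _ ≤ ∫ t in (1 / 8 : ℝ)..(3 / 8), exp (s * sin (2 * π * t) ^ 2) * g t := by
        refine intervalIntegral.integral_mono_on (by norm_num)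
          ((continuous_const.mul hg).intervalIntegrable _ _) ((hF s).intervalIntegrable _ _)
          fun t ht => mul_le_mul_of_nonneg_right (exp_le_exp.2 ?_) (hg_pos t).le
        nlinarith [half_le_sin_two_pi_mul_sq ht]
    _ ≤ ∫ t in (0 : ℝ)..1, exp (s * sin (2 * π * t) ^ 2) * g t :=
        intervalIntegral.integral_mono_interval (by norm_num) (by norm_num) (by norm_num)
          (.of_forall fun t => (mul_pos (exp_pos _) (hg_pos t)).le) ((hF s).intervalIntegrable _ _)

theorem exists_integral_exp_mul_sin_sq_mul_eq (hg : Continuous g) (hg_pos : ∀ t, 0 < g t)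
    {T : ℝ} (hT : 0 < T) : ∃ s, ∫ t in (0 : ℝ)..1, exp (s * sin (2 * π * t) ^ 2) * g t = T :=
  mem_range_of_exists_le_of_exists_ge
    (intervalIntegral.continuous_parametric_intervalIntegral_of_continuous' (by fun_prop) 0 1)
    ((tendsto_integral_exp_mul_sin_sq_mul_atBot hg).eventually_le_const hT).exists
    ((tendsto_integral_exp_mul_sin_sq_mul_atTop hg hg_pos).eventually_ge_atTop T).exists

end ExpSinSqIntegral

/-- Lemma 2.2: under (V₁), for every `H > 0`, `R > 0` and unit vector `e`,
there is a `C¹` loop `q : [0,1] → ℝ^N \ {0}` with `q 0 = q 1 = R e`,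
`q (t + 1/2) = -q t` on `[0, 1/2]`, and
`∫₀¹ (V (q t) + ½ ⟪∇V (q t), q t⟫) dt = H`. -/
theorem stmt_7 {N : ℕ} (hN : 2 ≤ N) (V : EuclideanSpace ℝ (Fin N) → ℝ)
    (hV : ContDiffOn ℝ 1 V {0}ᶜ) (α : ℝ) (hα : α ∈ Set.Ioo (0 : ℝ) 2)
    (hV1 : ∀ x : EuclideanSpace ℝ (Fin N), x ≠ 0 →
      ⟪x, gradient V x⟫_ℝ = -α * V x ∧ -α * V x < 0)
    (H : ℝ) (hH : 0 < H) (R : ℝ) (hR : 0 < R)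
    (e : EuclideanSpace ℝ (Fin N)) (he : ‖e‖ = 1) :
    ∃ q : ℝ → EuclideanSpace ℝ (Fin N),
      ContDiffOn ℝ 1 q (Set.Icc 0 1) ∧
      (∀ t ∈ Set.Icc (0 : ℝ) 1, q t ≠ 0) ∧
      q 0 = R • e ∧ q 1 = R • e ∧
      (∀ t ∈ Set.Icc (0 : ℝ) (1/2), q (t + 1/2) = -q t) ∧
      ∫ t in (0:ℝ)..1, (V (q t) + (1/2) * ⟪gradient V (q t), q t⟫_ℝ) = H := by
  obtain ⟨hα0, hα2⟩ := hα
  have hEuler : ∀ x ≠ 0, ⟪x, gradient V x⟫_ℝ = -α * V x := fun x hx => (hV1 x hx).1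
  have hVpos : ∀ x ≠ 0, 0 < V x := fun x hx => by nlinarith [(hV1 x hx).2]
  obtain ⟨f, hf, hef⟩ := exists_norm_eq_one_inner_eq_zero (by simpa using hN) e
  have hq_ne (s t : ℝ) : modulatedCircle e f R s t ≠ 0 :=
    modulatedCircle_ne_zero R s hR.ne' he hf hef t
  obtain ⟨s, hs⟩ :=
    exists_integral_exp_mul_sin_sq_mul_eq (g := fun t => V (modulatedCircle e f R 0 t))
      (hV.continuousOn.comp_continuous (contDiff_modulatedCircle (n := 0) e f R 0).continuous
        (hq_ne 0))
      (fun t => hVpos _ (hq_ne 0 t)) (div_pos hH (by linarith : 0 < 1 - α / 2))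
  refine ⟨modulatedCircle e f R (-s / α), (contDiff_modulatedCircle e f R _).contDiffOn,
    fun t _ => hq_ne _ t, modulatedCircle_zero e f R _, modulatedCircle_one e f R _,
    fun t _ => modulatedCircle_antiperiodic e f R _ t, ?_⟩
  calc _ = ∫ t in (0 : ℝ)..1,
        (1 - α / 2) * (exp (s * sin (2 * π * t) ^ 2) * V (modulatedCircle e f R 0 t)) := by
        refine intervalIntegral.integral_congr fun t _ => ?_
        rw [real_inner_comm, hEuler _ (hq_ne _ t), modulatedCircle_eq_exp_smul,
          apply_exp_smul_of_inner_gradient (hV.differentiableOn one_ne_zero) hEuler (hq_ne 0 t)]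
        field_simp
        ring
    _ = H := by
        rw [intervalIntegral.integral_const_mul, hs]
        field_simp
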